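/- arXiv:2207.08521 — 2 statements merged into one kernel-verified Lean document; each statement's English description precedes it below -/
import Mathlib

section
/- (Stokes' Theorem for helicity) Let M be a compact oriented smooth manifold of dimension kn with boundary, and ω an exact k-form on M, with n ≥ 2. Then ∫_M ω^{∧n} = ∫_{∂M} α ∧ (ω|_{∂M})^{∧(n−1)}, where α is any primitive of ω restricted to ∂M; i.e., the volume ∫_M ω^{∧n} equals the helicity of the boundary h(∂M, O_{∂M}, ω_{∂M}). -/
/-- An abstract calculus of differential forms on a manifold: a (not necessarily
commutative) graded ℝ-algebra of forms, with grading `deg`, wedge product given by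
multiplication, and exterior differential `d` satisfying the usual rules
(degree bookkeeping, `d ∘ d = 0`, graded Leibniz rule, graded commutativity). -/
structure FormCalculus (Form : Type*) [Ring Form] [Algebra ℝ Form] where
  deg : ℕ → Submodule ℝ Form
  d : Form →ₗ[ℝ] Form
  d_mem : ∀ {p : ℕ} {a : Form}, a ∈ deg p → d a ∈ deg (p + 1)
  d_d : ∀ a : Form, d (d a) = 0
  mul_mem : ∀ {p q : ℕ} {a b : Form}, a ∈ deg p → b ∈ deg q → a * b ∈ deg (p + q)
  leibniz : ∀ {p : ℕ} (a b : Form), a ∈ deg p →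
    d (a * b) = d a * b + ((-1 : ℝ) ^ p) • (a * d b)
  graded_comm : ∀ {p q : ℕ} (a b : Form), a ∈ deg p → b ∈ deg q →
    a * b = ((-1 : ℝ) ^ (p * q)) • (b * a)

/-- Stokes' theorem for helicity: Let `M` be a compact oriented smooth
`kn`-dimensional manifold with boundary (abstracted as form calculi `CM` on `M` and
`CB` on `∂M`, a restriction (pullback) homomorphism `res` commuting with `d`, an
integral over `M` and an integral over `∂M` related by the classical Stokes theorem
`∫_M dη = ∫_{∂M} η|_{∂M}`), and let `ω` be an exact `k`-form on `M` with primitive `α`,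
`n ≥ 2`. Then `∫_M ω^{∧n} = ∫_{∂M} (α|_{∂M}) ∧ (ω|_{∂M})^{∧(n−1)}`, i.e. the total
volume of `(M, ω)` equals the helicity of its boundary. -/
theorem stokes_for_helicity
    {FM FB : Type*} [Ring FM] [Algebra ℝ FM] [Ring FB] [Algebra ℝ FB]
    (CM : FormCalculus FM) (CB : FormCalculus FB)
    (res : FM →ₐ[ℝ] FB)
    (res_d : ∀ a : FM, res (CM.d a) = CB.d (res a))
    (res_deg : ∀ {p : ℕ} {a : FM}, a ∈ CM.deg p → res a ∈ CB.deg p)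
    (intM : FM →ₗ[ℝ] ℝ) (intB : FB →ₗ[ℝ] ℝ)
    (stokes : ∀ a : FM, intM (CM.d a) = intB (res a))
    (k n : ℕ) (hn : 2 ≤ n)
    (ω α : FM) (hα : α ∈ CM.deg (k - 1)) (hω : ω ∈ CM.deg k) (hdα : CM.d α = ω) :
    intM (ω ^ n) = intB (res α * (res ω) ^ (n - 1)) := by

  have hdω : CM.d ω = 0 := by rw [← hdα, CM.d_d]
  have hdpow : ∀ m : ℕ, CM.d (ω ^ (m + 1)) = 0 := by
    intro m
    induction m with
    | zero => simpa using hdω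
    | succ m ih =>
      rw [pow_succ', CM.leibniz ω (ω ^ (m + 1)) hω, hdω, ih, zero_mul, mul_zero, smul_zero,
        add_zero]
  obtain ⟨m, rfl⟩ : ∃ m, n = m + 2 := ⟨n - 2, by omega⟩
  have key : CM.d (α * ω ^ (m + 2 - 1)) = ω ^ (m + 2) := by
    have : m + 2 - 1 = m + 1 := rfl
    rw [this, CM.leibniz α (ω ^ (m + 1)) hα, hdα, hdpow, mul_zero, smul_zero, add_zero,
      ← pow_succ']
  rw [← key, stokes, map_mul, map_pow]
end

section
/- (Bounded-hull capacity is a capacity) Let C be the category whose objects are bounded open subsets of ℝ² (with the standard area form) and whose morphisms U → U' are restrictions to U of area-preserving diffeomorphisms φ of ℝ² with φ(U) ⊆ U'. Define c(U) to be the Lebesgue measure of the bounded hull of U, namely the union of U with all bounded connected components of ℝ² \ U. Then c is monotone (existence of a morphism U → U' implies c(U) ≤ c(U')) and satisfies c(aU') = a·c(U') under the rescaling action; i.e., c is a generalized capacity on C. -/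
open MeasureTheory
open scoped ENNReal

noncomputable section

/-- The plane, as a Euclidean space. -/
abbrev E2 := EuclideanSpace ℝ (Fin 2)

/-- The bounded hull of a subset of the plane: the union of the set with all bounded
connected components of its complement. -/
def boundedHull (U : Set E2) : Set E2 :=
  U ∪ {x | x ∉ U ∧ Bornology.IsBounded (connectedComponentIn Uᶜ x)}

/-- A symplectomorphism of the plane: a smooth diffeomorphism preserving the standard
symplectic (area) form, i.e. with Jacobian determinant 1 everywhere. -/
def IsSymplectomorphism (φ : E2 → E2) : Prop :=
  ∃ ψ : E2 → E2, ContDiff ℝ (⊤ : ℕ∞) φ ∧ ContDiff ℝ (⊤ : ℕ∞) ψ ∧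
    Function.LeftInverse ψ φ ∧ Function.RightInverse ψ φ ∧
    ∀ x : E2, LinearMap.det (fderiv ℝ φ x).toLinearMap = 1

/-- The connected component of a point in a closed set is closed. -/
lemma isClosed_connectedComponentIn_of_isClosed {X : Type*} [TopologicalSpace X] {F : Set X}
    (hF : IsClosed F) (x : X) : IsClosed (connectedComponentIn F x) := by
  by_cases hx : x ∈ F
  · rw [connectedComponentIn_eq_image hx]
    exact hF.isClosedMap_subtype_val _ isClosed_connectedComponent
  · rw [connectedComponentIn_eq_empty hx]
    exact isClosed_empty

lemma one_lt_rank_E2 : 1 < Module.rank ℝ E2 := by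
  rw [← Module.finrank_eq_rank]
  norm_num [finrank_euclideanSpace_fin]

/-- The complement of a closed ball in the plane is connected. -/
lemma isConnected_compl_closedBall_E2 {R : ℝ} (hR : 0 < R) :
    IsConnected ((Metric.closedBall (0 : E2) R)ᶜ) := by
  have hsph : IsConnected (Metric.sphere (0 : E2) 1) :=
    isConnected_sphere one_lt_rank_E2 0 zero_le_one
  have hprod : IsConnected ((Metric.sphere (0 : E2) 1) ×ˢ (Set.Ioi R)) :=
    ⟨(hsph.nonempty.prod (Set.nonempty_Ioi (a := R))),
      hsph.isPreconnected.prod isConnected_Ioi.isPreconnected⟩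
  have hcont : Continuous (fun p : E2 × ℝ => p.2 • p.1) :=
    continuous_snd.smul continuous_fst
  have himg := hprod.image _ hcont.continuousOn
  suffices heq : (fun p : E2 × ℝ => p.2 • p.1) '' ((Metric.sphere (0 : E2) 1) ×ˢ (Set.Ioi R)) =
      (Metric.closedBall (0 : E2) R)ᶜ by rwa [heq] at himg
  apply Set.Subset.antisymm
  · rintro _ ⟨⟨v, t⟩, ⟨hv, ht⟩, rfl⟩
    simp only [Metric.mem_sphere, dist_zero_right] at hv
    simp only [Set.mem_Ioi] at ht
    simp only [Set.mem_compl_iff, Metric.mem_closedBall, dist_zero_right, not_le, norm_smul,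
      hv, mul_one]
    calc R < t := ht
      _ ≤ |t| := le_abs_self t
      _ = ‖t‖ := rfl
  · intro y hy
    simp only [Set.mem_compl_iff, Metric.mem_closedBall, dist_zero_right, not_le] at hy
    have hy0 : ‖y‖ ≠ 0 := (hR.trans hy).ne'
    refine ⟨(‖y‖⁻¹ • y, ‖y‖), ⟨?_, hy⟩, ?_⟩
    · simp only [Metric.mem_sphere, dist_zero_right, norm_smul, norm_inv, norm_norm]
      field_simp
    · simp only [smul_smul, mul_inv_cancel₀ hy0, one_smul]

/-- The bounded hull of a bounded open set is the complement of the unbounded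
connected component of the complement. -/
lemma boundedHull_eq_compl {U : Set E2} (hU : IsOpen U) (hUb : Bornology.IsBounded U) :
    ∃ C : Set E2, IsClosed C ∧ boundedHull U = Cᶜ := by
  obtain ⟨r, hr⟩ := hUb.subset_closedBall 0
  set R : ℝ := max r 1 with hRdef
  have hR : 0 < R := lt_of_lt_of_le one_pos (le_max_right _ _)
  have hUR : U ⊆ Metric.closedBall 0 R :=
    hr.trans (Metric.closedBall_subset_closedBall (le_max_left _ _))
  have hcompl : (Metric.closedBall (0 : E2) R)ᶜ ⊆ Uᶜ := Set.compl_subset_compl.2 hUR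
  set z : E2 := (R + 1) • EuclideanSpace.single (0 : Fin 2) (1 : ℝ) with hzdef
  have hznorm : ‖z‖ = R + 1 := by
    rw [hzdef, norm_smul]
    simp [EuclideanSpace.norm_single, abs_of_pos (by linarith : (0:ℝ) < R + 1)]
  have hzball : z ∈ (Metric.closedBall (0 : E2) R)ᶜ := by
    simp only [Set.mem_compl_iff, Metric.mem_closedBall, dist_zero_right, hznorm, not_le]
    linarith
  set C : Set E2 := connectedComponentIn Uᶜ z with hCdef
  have hCclosed : IsClosed C :=
    isClosed_connectedComponentIn_of_isClosed (hU.isClosed_compl) z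
  have hballC : (Metric.closedBall (0 : E2) R)ᶜ ⊆ C :=
    (isConnected_compl_closedBall_E2 hR).isPreconnected.subset_connectedComponentIn
      hzball hcompl
  have hCco : C ⊆ Uᶜ := connectedComponentIn_subset _ _
  have hCunb : ¬ Bornology.IsBounded C := by
    intro hbd
    obtain ⟨r', hr'⟩ := hbd.subset_closedBall 0
    have hw : (max (R + 1) (r' + 1)) • EuclideanSpace.single (0 : Fin 2) (1 : ℝ) ∈ C := by
      apply hballC
      simp only [Set.mem_compl_iff, Metric.mem_closedBall, dist_zero_right, not_le, norm_smul,
        EuclideanSpace.norm_single, norm_one, mul_one]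
      rw [Real.norm_eq_abs, abs_of_pos (by positivity : (0:ℝ) < max (R + 1) (r' + 1))]
      calc R < R + 1 := by linarith
        _ ≤ _ := le_max_left _ _
    have := hr' hw
    simp only [Metric.mem_closedBall, dist_zero_right, norm_smul, EuclideanSpace.norm_single,
      norm_one, mul_one] at this
    rw [Real.norm_eq_abs, abs_of_pos (by positivity : (0:ℝ) < max (R + 1) (r' + 1))] at this
    have : r' + 1 ≤ r' := le_trans (le_max_right (R + 1) (r' + 1)) this
    linarith
  refine ⟨C, hCclosed, ?_⟩
  apply Set.Subset.antisymm
  · rintro x (hx | ⟨hxU, hxb⟩)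
    · exact fun hxC => hCco hxC hx
    · intro hxC
      have : connectedComponentIn Uᶜ z = connectedComponentIn Uᶜ x :=
        connectedComponentIn_eq hxC
      apply hCunb
      show Bornology.IsBounded (connectedComponentIn Uᶜ z)
      rw [this]
      exact hxb
  · intro x hx
    by_cases hxU : x ∈ U
    · exact Or.inl hxU
    refine Or.inr ⟨hxU, ?_⟩
    have hsub : connectedComponentIn Uᶜ x ⊆ Metric.closedBall 0 R := by
      intro y hy
      by_contra hyB
      have hyC : y ∈ C := hballC hyB
      have h1 : connectedComponentIn Uᶜ x = connectedComponentIn Uᶜ y :=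
        connectedComponentIn_eq hy
      have h2 : C = connectedComponentIn Uᶜ y := connectedComponentIn_eq hyC
      apply hx
      show x ∈ connectedComponentIn Uᶜ z
      have h3 : connectedComponentIn Uᶜ z = connectedComponentIn Uᶜ y := h2
      rw [h3, ← h1]
      exact mem_connectedComponentIn hxU
    exact (Metric.isBounded_closedBall).subset hsub

/-- A homeomorphism of the plane mapping `U` into `U'` maps the bounded hull of `U`
into the bounded hull of `U'`. -/
lemma image_boundedHull_subset {φ ψ : E2 → E2} (hφ : Continuous φ) (hψ : Continuous ψ)
    (hl : Function.LeftInverse ψ φ) (hr : Function.RightInverse ψ φ)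
    {U U' : Set E2} (h : φ '' U ⊆ U') :
    φ '' boundedHull U ⊆ boundedHull U' := by
  rintro _ ⟨x, hx, rfl⟩
  rcases hx with hx | ⟨hxU, hxb⟩
  · exact Or.inl (h ⟨x, hx, rfl⟩)
  by_cases hφx : φ x ∈ U'
  · exact Or.inl hφx
  refine Or.inr ⟨hφx, ?_⟩
  have hsub : ψ '' connectedComponentIn U'ᶜ (φ x) ⊆ connectedComponentIn Uᶜ x := by
    apply IsPreconnected.subset_connectedComponentIn
    · exact isPreconnected_connectedComponentIn.image _ hψ.continuousOn
    · exact ⟨φ x, mem_connectedComponentIn hφx, hl x⟩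
    · rintro _ ⟨y, hy, rfl⟩ hyU
      exact (connectedComponentIn_subset _ _ hy) (h ⟨ψ y, hyU, hr y⟩)
  have hKeq : φ '' (ψ '' connectedComponentIn U'ᶜ (φ x)) = connectedComponentIn U'ᶜ (φ x) := by
    rw [Set.image_image]
    rw [show (fun y => φ (ψ y)) = id from funext fun y => hr y]
    exact Set.image_id _
  have hbd : Bornology.IsBounded (φ '' connectedComponentIn Uᶜ x) := by
    have hcl : IsCompact (closure (connectedComponentIn Uᶜ x)) := hxb.isCompact_closure
    exact ((hcl.image hφ).isBounded).subset
      (Set.image_mono subset_closure)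
  exact (hbd.subset (hKeq ▸ Set.image_mono hsub))

/-- A symplectomorphism preserves Lebesgue measure on measurable sets. -/
lemma IsSymplectomorphism.measure_image {φ : E2 → E2} (hφ : IsSymplectomorphism φ)
    {s : Set E2} (hs : MeasurableSet s) : volume (φ '' s) = volume s := by
  obtain ⟨ψ, hφc, hψc, hl, hr, hdet⟩ := hφ
  have hdiff : ∀ x ∈ s, HasFDerivWithinAt φ (fderiv ℝ φ x) s x := fun x _ =>
    ((hφc.differentiable (by simp)) x).hasFDerivAt.hasFDerivWithinAt
  have hinj : Set.InjOn φ s := hl.injective.injOn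
  rw [← lintegral_abs_det_fderiv_eq_addHaar_image volume hs hdiff hinj]
  have : ∀ x : E2, ENNReal.ofReal |(fderiv ℝ φ x).det| = 1 := by
    intro x
    have : (fderiv ℝ φ x).det = 1 := hdet x
    simp [this]
  simp only [this]
  simp

/-- the bounded-hull capacity is a capacity: on the category whose
objects are bounded open subsets of ℝ² (with the standard area form) and whose
morphisms `U → U'` are restrictions of symplectomorphisms `φ` of ℝ² with
`φ(U) ⊆ U'`, the map `c(U) := Leb(boundedHull U)` is monotone, and it is
conformal with respect to the rescaling action: rescaling the form by `a = s² > 0`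
(realized by the dilation `x ↦ s • x`) multiplies `c` by `a`. -/
theorem boundedHull_capacity
    (U U' : Set E2) (hU : IsOpen U) (hUb : Bornology.IsBounded U)
    (hU' : IsOpen U') (hU'b : Bornology.IsBounded U') :
    ((∃ φ : E2 → E2, IsSymplectomorphism φ ∧ φ '' U ⊆ U') →
      volume (boundedHull U) ≤ volume (boundedHull U')) ∧
    (∀ s : ℝ, 0 < s →
      volume (boundedHull ((s • ·) '' U)) =
        ENNReal.ofReal (s ^ 2) * volume (boundedHull U)) := by
  constructor
  · rintro ⟨φ, hφ, hφU⟩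
    obtain ⟨C, hC, hCeq⟩ := boundedHull_eq_compl hU hUb
    have hmeas : MeasurableSet (boundedHull U) := by
      rw [hCeq]; exact hC.measurableSet.compl
    obtain ⟨ψ, hφc, hψc, hl, hr, hdet⟩ := hφ
    have hmap : φ '' boundedHull U ⊆ boundedHull U' :=
      image_boundedHull_subset (hφc.continuous) (hψc.continuous) hl hr hφU
    calc volume (boundedHull U) = volume (φ '' boundedHull U) :=
          (IsSymplectomorphism.measure_image ⟨ψ, hφc, hψc, hl, hr, hdet⟩ hmeas).symm
      _ ≤ volume (boundedHull U') := measure_mono hmap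
  · intro s hs
    have hs0 : s ≠ 0 := hs.ne'
    have hcont : Continuous (fun x : E2 => s • x) := continuous_const_smul s
    have hcont' : Continuous (fun x : E2 => s⁻¹ • x) := continuous_const_smul s⁻¹
    have hli : Function.LeftInverse (fun x : E2 => s⁻¹ • x) (fun x : E2 => s • x) :=
      fun x => inv_smul_smul₀ hs0 x
    have hri : Function.RightInverse (fun x : E2 => s⁻¹ • x) (fun x : E2 => s • x) :=
      fun x => smul_inv_smul₀ hs0 x
    have h1 : (s • ·) '' boundedHull U ⊆ boundedHull ((s • ·) '' U) :=
      image_boundedHull_subset hcont hcont' hli hri subset_rfl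
    have hback : (fun x : E2 => s⁻¹ • x) '' ((s • ·) '' U) ⊆ U := by
      rintro _ ⟨_, ⟨y, hy, rfl⟩, rfl⟩
      simpa [inv_smul_smul₀ hs0] using hy
    have h2 : (fun x : E2 => s⁻¹ • x) '' boundedHull ((s • ·) '' U) ⊆ boundedHull U :=
      image_boundedHull_subset hcont' hcont hri hli hback
    have h2' : boundedHull ((s • ·) '' U) ⊆ (s • ·) '' boundedHull U := by
      intro x hx
      have : s⁻¹ • x ∈ boundedHull U := h2 ⟨x, hx, rfl⟩
      exact ⟨s⁻¹ • x, this, smul_inv_smul₀ hs0 x⟩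
    have heq : boundedHull ((s • ·) '' U) = (s • ·) '' boundedHull U :=
      Set.Subset.antisymm h2' h1
    rw [heq, Set.image_smul, Measure.addHaar_smul volume s (boundedHull U),
      finrank_euclideanSpace_fin, abs_of_nonneg (sq_nonneg s)]

end
end
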